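/- The congruence Cg^{B_n}(a, 0) is an atom in the congruence lattice of B_n: for any u ≠ v in B_n with (u,v) ∈ Cg^{B_n}(a,0), we have Cg^{B_n}(a,0) ⊆ Cg^{B_n}(u,v). (The key step: the projection of B_n to its first coordinate equals {0, D}, and for any such u, v we get {u ∧ a, v ∧ a} = {0, a}.) -/

import Mathlib

/-- The three-element set `M = {0, D, ∂D}`. -/
inductive Mc : Type
  | z : Mc
  | D : Mc
  | pD : Mc
deriving DecidableEq

/-- The fixed-point-free involution `∂` exchanging `D` and `∂D`
(its value on `0` is irrelevant to the operations below). -/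
def pd : Mc → Mc
  | Mc.D => Mc.pD
  | Mc.pD => Mc.D
  | Mc.z => Mc.z

/-- Height-1 meet on `M`: `x ∧ y = x` if `x = y`, else `0`. -/
def mmt (x y : Mc) : Mc := if x = y then x else Mc.z

/-- `J(x,y,w) = x` if `x = y`; `x ∧ w` if `x = ∂y`; `0` otherwise. -/
def mJ (x y w : Mc) : Mc := if x = y then x else if x = pd y then mmt x w else Mc.z

/-- `J'(x,y,w) = x ∧ w` if `x = y`; `x` if `x = ∂y`; `0` otherwise. -/
def mJ' (x y w : Mc) : Mc := if x = y then mmt x w else if x = pd y then x else Mc.z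

/-- Pointwise meet on `M^n`. -/
def vmt {n : ℕ} (x y : Fin n → Mc) : Fin n → Mc := fun l => mmt (x l) (y l)

/-- Pointwise `J` on `M^n`. -/
def vJ {n : ℕ} (x y w : Fin n → Mc) : Fin n → Mc := fun l => mJ (x l) (y l) (w l)

/-- Pointwise `J'` on `M^n`. -/
def vJ' {n : ℕ} (x y w : Fin n → Mc) : Fin n → Mc := fun l => mJ' (x l) (y l) (w l)

/-- The zero tuple in `M^n`. -/
def vz (n : ℕ) : Fin n → Mc := fun _ => Mc.z

/-- `b_i`: `D` in (1-indexed) coordinates `1..i`, `0` afterwards. -/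
def vb (n i : ℕ) : Fin n → Mc := fun l => if l.val < i then Mc.D else Mc.z

/-- `d_i`: `D` in coordinates `1..i-1`, `∂D` in coordinate `i`, `0` afterwards. -/
def vd (n i : ℕ) : Fin n → Mc := fun l =>
  if l.val + 1 < i then Mc.D else if l.val + 1 = i then Mc.pD else Mc.z

/-- `c_i`: `0` in coordinate `1`, `D` in coordinates `2..i`, `0` afterwards. -/
def vc (n i : ℕ) : Fin n → Mc := fun l =>
  if l.val = 0 then Mc.z else if l.val < i then Mc.D else Mc.z

/-- `a = b_1 = (D,0,…,0)`. -/
def va (n : ℕ) : Fin n → Mc := vb n 1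

/-- The subuniverse `B_n` of `M^n`, generated by `{a} ∪ {b_i, d_i : 2 ≤ i ≤ n}`
under the pointwise operations `∧`, `J`, `J'`. -/
inductive Bn (n : ℕ) : (Fin n → Mc) → Prop
  | gen_a : Bn n (va n)
  | gen_b (i : ℕ) (h2 : 2 ≤ i) (hn : i ≤ n) : Bn n (vb n i)
  | gen_d (i : ℕ) (h2 : 2 ≤ i) (hn : i ≤ n) : Bn n (vd n i)
  | cmt {x y} : Bn n x → Bn n y → Bn n (vmt x y)
  | cJ {x y w} : Bn n x → Bn n y → Bn n w → Bn n (vJ x y w)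
  | cJ' {x y w} : Bn n x → Bn n y → Bn n w → Bn n (vJ' x y w)

/-- The congruence of the algebra with universe `C` (a subuniverse of `M^n`) generated by the
pair `(a, b)`: the smallest equivalence relation on `C` containing `(a,b)` and compatible with
the operations `∧`, `J`, `J'`. -/
inductive CgC {n : ℕ} (C : (Fin n → Mc) → Prop) (a b : Fin n → Mc) :
    (Fin n → Mc) → (Fin n → Mc) → Prop
  | base : CgC C a b a b
  | refl {x} (hx : C x) : CgC C a b x x
  | symm {x y} : CgC C a b x y → CgC C a b y x
  | trans {x y z} : CgC C a b x y → CgC C a b y z → CgC C a b x z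
  | cmt {x x' y y'} : CgC C a b x x' → CgC C a b y y' → CgC C a b (vmt x y) (vmt x' y')
  | cJ {x x' y y' w w'} : CgC C a b x x' → CgC C a b y y' → CgC C a b w w' →
      CgC C a b (vJ x y w) (vJ x' y' w')
  | cJ' {x x' y y' w w'} : CgC C a b x x' → CgC C a b y y' → CgC C a b w w' →
      CgC C a b (vJ' x y w) (vJ' x' y' w')

/-- Unary polynomials of the algebra with universe `C`: functions built by composition from
the operations `∧`, `J`, `J'`, constants from `C`, and the identity. -/
inductive PolyC {n : ℕ} (C : (Fin n → Mc) → Prop) : ((Fin n → Mc) → (Fin n → Mc)) → Prop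
  | id : PolyC C id
  | const {c} (h : C c) : PolyC C (fun _ => c)
  | pmt {f g} : PolyC C f → PolyC C g → PolyC C (fun x => vmt (f x) (g x))
  | pJ {f g h} : PolyC C f → PolyC C g → PolyC C h → PolyC C (fun x => vJ (f x) (g x) (h x))
  | pJ' {f g h} : PolyC C f → PolyC C g → PolyC C h → PolyC C (fun x => vJ' (f x) (g x) (h x))

/-- Fundamental translations of the algebra with universe `C`: unary polynomials obtained from
one of the operations `∧`, `J`, `J'` by fixing all but one argument at constants from `C`. -/
inductive FT {n : ℕ} (C : (Fin n → Mc) → Prop) : ((Fin n → Mc) → (Fin n → Mc)) → Prop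
  | mtL {c} (h : C c) : FT C (fun x => vmt x c)
  | mtR {c} (h : C c) : FT C (fun x => vmt c x)
  | J1 {c d} (hc : C c) (hd : C d) : FT C (fun x => vJ x c d)
  | J2 {c d} (hc : C c) (hd : C d) : FT C (fun x => vJ c x d)
  | J3 {c d} (hc : C c) (hd : C d) : FT C (fun x => vJ c d x)
  | J'1 {c d} (hc : C c) (hd : C d) : FT C (fun x => vJ' x c d)
  | J'2 {c d} (hc : C c) (hd : C d) : FT C (fun x => vJ' c x d)
  | J'3 {c d} (hc : C c) (hd : C d) : FT C (fun x => vJ' c d x)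

/-- The support of a tuple: the set of coordinates where it is nonzero. -/
def suppF {n : ℕ} (x : Fin n → Mc) : Finset (Fin n) :=
  Finset.univ.filter (fun l => x l ≠ Mc.z)

/-!
Every element of `B_n` has first coordinate `0` or `D`, since the generators do and each operation
returns its first argument or `0`. A pair in `Cg(a, 0)` agrees wherever `a` and `0` agree, i.e. off
the first coordinate. So two distinct `u, v` related by `Cg(a, 0)` are `D` and `0` (in some order)
in the first coordinate and equal elsewhere, and meeting with `a` sends them to `a` and `0`.
-/

instance : Fintype Mc := ⟨{Mc.z, Mc.D, Mc.pD}, fun x => by cases x <;> simp⟩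

namespace Mc

lemma mmt_ne_pD {x : Mc} (y : Mc) (hx : x ≠ pD) : mmt x y ≠ pD := by
  revert x y; decide

lemma mJ_ne_pD {x : Mc} (y w : Mc) (hx : x ≠ pD) : mJ x y w ≠ pD := by
  revert x y w; decide

lemma mJ'_ne_pD {x : Mc} (y w : Mc) (hx : x ≠ pD) : mJ' x y w ≠ pD := by
  revert x y w; decide

lemma eq_D_and_eq_z_or {x y : Mc} (hx : x ≠ pD) (hy : y ≠ pD) (hxy : x ≠ y) :
    x = D ∧ y = z ∨ x = z ∧ y = D := by
  revert x y; decide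

end Mc

lemma Bn.apply_ne_pD {n : ℕ} {x : Fin n → Mc} (hx : Bn n x) {l : Fin n} (hl : l.val = 0) :
    x l ≠ Mc.pD := by
  induction hx with
  | gen_a => simp [va, vb, hl]
  | gen_b i h2 _ => simp [vb, hl, show 0 < i by omega]
  | gen_d i h2 _ => simp [vd, hl, show 1 < i by omega]
  | cmt _ _ ihx _ => exact Mc.mmt_ne_pD _ ihx
  | cJ _ _ _ ihx _ _ => exact Mc.mJ_ne_pD _ _ ihx
  | cJ' _ _ _ ihx _ _ => exact Mc.mJ'_ne_pD _ _ ihx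

namespace CgC

variable {n : ℕ} {C : (Fin n → Mc) → Prop} {a b u v x y : Fin n → Mc}

lemma apply_eq {l : Fin n} (h : CgC C a b x y) (hl : a l = b l) : x l = y l := by
  induction h with
  | base => exact hl
  | refl _ => rfl
  | symm _ ih => exact ih.symm
  | trans _ _ ih₁ ih₂ => exact ih₁.trans ih₂
  | cmt _ _ ih₁ ih₂ => exact congrArg₂ mmt ih₁ ih₂
  | cJ _ _ _ ih₁ ih₂ ih₃ => simp only [vJ, ih₁, ih₂, ih₃]
  | cJ' _ _ _ ih₁ ih₂ ih₃ => simp only [vJ', ih₁, ih₂, ih₃]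

lemma of_generator_mem (h : CgC C a b x y) (hab : CgC C u v a b) : CgC C u v x y := by
  induction h with
  | base => exact hab
  | refl hx => exact refl hx
  | symm _ ih => exact ih.symm
  | trans _ _ ih₁ ih₂ => exact ih₁.trans ih₂
  | cmt _ _ ih₁ ih₂ => exact cmt ih₁ ih₂
  | cJ _ _ _ ih₁ ih₂ ih₃ => exact cJ ih₁ ih₂ ih₃
  | cJ' _ _ _ ih₁ ih₂ ih₃ => exact cJ' ih₁ ih₂ ih₃

lemma swap_generator (h : CgC C u v x y) : CgC C v u x y :=
  h.of_generator_mem base.symm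

end CgC

lemma vmt_va_of_apply_eq_D {n : ℕ} {u : Fin n → Mc} {l : Fin n} (hl : l.val = 0)
    (hu : u l = Mc.D) : vmt u (va n) = va n := by
  funext m
  by_cases hm : m.val = 0
  · obtain rfl : m = l := Fin.ext (by omega)
    simp [vmt, va, vb, mmt, hm, hu]
  · simp [vmt, va, vb, mmt, hm]

lemma vmt_va_of_apply_eq_z {n : ℕ} {u : Fin n → Mc} {l : Fin n} (hl : l.val = 0)
    (hu : u l = Mc.z) : vmt u (va n) = vz n := by
  funext m
  by_cases hm : m.val = 0
  · obtain rfl : m = l := Fin.ext (by omega)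
    simp [vmt, va, vb, vz, mmt, hu]
  · simp [vmt, va, vb, vz, mmt, hm]

lemma CgC.va_vz_of_apply {n : ℕ} {C : (Fin n → Mc) → Prop} (hC : C (va n))
    {u v : Fin n → Mc} {l : Fin n} (hl : l.val = 0) (hu : u l = Mc.D) (hv : v l = Mc.z) :
    CgC C u v (va n) (vz n) := by
  have h : CgC C u v (vmt u (va n)) (vmt v (va n)) := cmt base (refl hC)
  rwa [vmt_va_of_apply_eq_D hl hu, vmt_va_of_apply_eq_z hl hv] at h

theorem Cg_a_zero_atomic_general {n : ℕ} :
    ∀ u v : Fin n → Mc, Bn n u → Bn n v → u ≠ v →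
      CgC (Bn n) (va n) (vz n) u v →
      ∀ x y : Fin n → Mc, CgC (Bn n) (va n) (vz n) x y → CgC (Bn n) u v x y := by
  intro u v hu hv hne huv x y hxy
  obtain ⟨l, hl⟩ := Function.ne_iff.mp hne
  have hl0 : l.val = 0 := by
    by_contra h
    exact hl (huv.apply_eq (by simp [va, vb, vz, h]))
  refine hxy.of_generator_mem ?_
  rcases Mc.eq_D_and_eq_z_or (hu.apply_ne_pD hl0) (hv.apply_ne_pD hl0) hl with ⟨hu, hv⟩ | ⟨hu, hv⟩
  · exact CgC.va_vz_of_apply Bn.gen_a hl0 hu hv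
  · exact (CgC.va_vz_of_apply Bn.gen_a hl0 hv hu).swap_generator

/-- `Cg^{B_n}(a,0)` is an atom in the congruence lattice of `B_n`: for any `u ≠ v` in `B_n`
with `(u,v) ∈ Cg^{B_n}(a,0)`, we have `Cg^{B_n}(a,0) ⊆ Cg^{B_n}(u,v)`. -/
theorem Cg_a_zero_atomic {n : ℕ} (hn : 2 ≤ n) :
    ∀ u v : Fin n → Mc, Bn n u → Bn n v → u ≠ v →
      CgC (Bn n) (va n) (vz n) u v →
      ∀ x y : Fin n → Mc, CgC (Bn n) (va n) (vz n) x y → CgC (Bn n) u v x y :=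
  Cg_a_zero_atomic_general
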